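/- arXiv:1812.08528 — 4 statements merged into one kernel-verified Lean document; each statement's English description precedes it below -/
import Mathlib

section
/- For open-closed intervals J = (a,b] and J' = (a',b'] of ℝ, the Euler form satisfies ⟨1_J, 1_{J'}⟩ = [a < b' ≤ b] − [a < a' ≤ b], where [P] denotes 1 if the condition P holds and 0 otherwise. In particular, ⟨1_J, 1_J⟩ = 1. -/
open Set

/-- `S` is an open-closed interval `(a,b]` of `ℝ` with `a < b`. -/
def IsOC (S : Set ℝ) : Prop := ∃ a b : ℝ, a < b ∧ S = Set.Ioc a b

/-- The partial sum `J ⊕ J'` (concatenation) is defined: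
`J ∩ J' = ∅` and `J ∪ J'` is an open-closed interval. -/
def SumDef (J J' : Set ℝ) : Prop := J ∩ J' = ∅ ∧ IsOC (J ∪ J')

/-- The partial difference `J ⊖ J'` (truncation) is defined:
`J' ⊆ J` and `J \ J'` is an open-closed interval. -/
def DiffDef (J J' : Set ℝ) : Prop := J' ⊆ J ∧ IsOC (J \ J')

/-- Euler form `⟨1_{(a,b]}, 1_{(a',b']}⟩ = [a < b' ≤ b] − [a < a' ≤ b]`. -/
noncomputable def eform (a b a' b' : ℝ) : ℤ :=
  (if a < b' ∧ b' ≤ b then 1 else 0) - (if a < a' ∧ a' ≤ b then 1 else 0)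

/-- Symmetrized Euler form `(1_J, 1_{J'}) = ⟨1_J,1_{J'}⟩ + ⟨1_{J'},1_J⟩`. -/
noncomputable def sform (a b a' b' : ℝ) : ℤ := eform a b a' b' + eform a' b' a b

/-- `ξ(J,J') = (−1)^{⟨1_J,1_{J'}⟩} (1_J,1_{J'})`. -/
noncomputable def xiform (a b a' b' : ℝ) : ℤ :=
  (-1 : ℤ) ^ (eform a b a' b').natAbs * sform a b a' b'

/-- The analytic Euler form `⟨f, g⟩ = Σ_x f₋(x) (g₋(x) − g₊(x))`. -/
noncomputable def eulerForm (f g : ℝ → ℝ) : ℝ :=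
  ∑ᶠ x : ℝ, Function.leftLim f x * (Function.leftLim g x - Function.rightLim g x)

/-! The indicator of `(a, b]` is left-continuous and its right limit is the indicator of `[a, b)`,
so `1_{(a', b']}` jumps only at `a'` (by `-1`) and at `b'` (by `+1`). Hence
`⟨f, 1_{(a', b']}⟩ = f₋(b') - f₋(a')` for every `f`, and for `f = 1_{(a, b]}` the left limits are
the values `[a < b' ≤ b]` and `[a < a' ≤ b]`. -/

open Filter Topology Function

section
variable {α : Type*} [LinearOrder α] [TopologicalSpace α] [OrderTopology α]

theorem eventually_nhdsLE_mem_Ioc_iff (a b x : α) :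
    ∀ᶠ y in 𝓝[≤] x, (y ∈ Ioc a b ↔ x ∈ Ioc a b) := by
  rcases le_or_gt x a with hxa | hax
  · filter_upwards [self_mem_nhdsWithin] with y (hy : y ≤ x)
    simp only [mem_Ioc, not_lt.2 hxa, not_lt.2 (hy.trans hxa), false_and]
  rcases le_or_gt x b with hxb | hbx
  · filter_upwards [Ioc_mem_nhdsLE hax] with y hy
    simp only [mem_Ioc, hax, hxb, hy.1, hy.2.trans hxb, and_self]
  · filter_upwards [Ioc_mem_nhdsLE hbx] with y hy
    simp only [mem_Ioc, not_le.2 hbx, not_le.2 hy.1, and_false]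

theorem eventually_nhdsGT_mem_Ioc_iff (a b x : α) :
    ∀ᶠ y in 𝓝[>] x, (y ∈ Ioc a b ↔ x ∈ Ico a b) := by
  rcases lt_or_ge x a with hxa | hax
  · filter_upwards [Ioo_mem_nhdsGT hxa] with y hy
    simp only [mem_Ioc, mem_Ico, not_lt.2 hy.2.le, not_le.2 hxa, false_and]
  rcases lt_or_ge x b with hxb | hbx
  · filter_upwards [Ioo_mem_nhdsGT hxb] with y hy
    simp only [mem_Ioc, mem_Ico, hax, hxb, hax.trans_lt hy.1, hy.2.le, and_self]
  · filter_upwards [self_mem_nhdsWithin] with y (hy : x < y)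
    simp only [mem_Ioc, mem_Ico, not_lt.2 hbx, not_le.2 (hbx.trans_lt hy), and_false]

variable {β : Type*} [TopologicalSpace β] [T2Space β] [Zero β] [One β]

theorem leftLim_indicator_Ioc (a b x : α) :
    leftLim ((Ioc a b).indicator (1 : α → β)) x = (Ioc a b).indicator 1 x := by
  refine ContinuousWithinAt.leftLim_eq (tendsto_const_nhds.congr' ?_)
  filter_upwards [eventually_nhdsLE_mem_Ioc_iff a b x] with y hy
  simp only [indicator_apply, hy, Pi.one_apply]

theorem rightLim_indicator_Ioc (a b x : α) [(𝓝[>] x).NeBot] :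
    rightLim ((Ioc a b).indicator (1 : α → β)) x = (Ico a b).indicator 1 x := by
  refine rightLim_eq_of_tendsto (tendsto_const_nhds.congr' ?_)
  filter_upwards [eventually_nhdsGT_mem_Ioc_iff a b x] with y hy
  simp only [indicator_apply, hy, Pi.one_apply]
end

theorem indicator_Ioc_sub_indicator_Ico {α G : Type*} [PartialOrder α] [AddCommGroup G]
    {a b : α} (hab : a ≤ b) (f : α → G) :
    (Ioc a b).indicator f - (Ico a b).indicator f =
      ({b} : Set α).indicator f - ({a} : Set α).indicator f := by
  rw [← Icc_sdiff_left, ← Icc_sdiff_right, indicator_sdiff (by simpa using hab),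
    indicator_sdiff (by simpa using hab)]
  abel

theorem eulerForm_indicator_Ioc_right (f : ℝ → ℝ) {a b : ℝ} (hab : a ≤ b) :
    eulerForm f ((Ioc a b).indicator 1) = leftLim f b - leftLim f a := by
  have hjump (x : ℝ) :
      leftLim ((Ioc a b).indicator (1 : ℝ → ℝ)) x - rightLim ((Ioc a b).indicator 1) x =
        ({b} : Set ℝ).indicator 1 x - ({a} : Set ℝ).indicator 1 x := by
    rw [leftLim_indicator_Ioc, rightLim_indicator_Ioc]
    exact congrFun (indicator_Ioc_sub_indicator_Ico hab 1) x
  simp only [eulerForm, hjump, mul_sub, ← indicator_mul_right, Pi.one_apply, mul_one]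
  rw [finsum_sub_distrib, ← finsum_mem_def, ← finsum_mem_def, finsum_mem_singleton,
    finsum_mem_singleton]
  all_goals exact (finite_singleton _).subset support_indicator_subset

theorem stmt_2 (a b a' b' : ℝ) (hab : a < b) (hab' : a' < b') :
    eulerForm ((Set.Ioc a b).indicator 1) ((Set.Ioc a' b').indicator 1) =
      ((if a < b' ∧ b' ≤ b then 1 else 0) - (if a < a' ∧ a' ≤ b then 1 else 0) : ℝ) ∧
    eulerForm ((Set.Ioc a b).indicator 1) ((Set.Ioc a b).indicator 1) = 1 := by
  simp only [eulerForm_indicator_Ioc_right _ hab'.le, eulerForm_indicator_Ioc_right _ hab.le,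
    leftLim_indicator_Ioc, indicator_apply, mem_Ioc, Pi.one_apply]
  simp [hab]
end

section
/- Let J, J', K be open-closed intervals of ℝ. If (K ⊖ J') ⊖ J is defined, then at least one of K ⊖ (J ⊕ J') and (K ⊖ J) ⊖ J' is also defined, and whenever two of the three elements (K ⊖ J') ⊖ J, K ⊖ (J ⊕ J'), (K ⊖ J) ⊖ J' are defined, they are equal. -/
open Set

lemma diff1 {a b c : ℝ} (hab : a ≤ b) : Ioc a c \ Ioc a b = Ioc b c := by
  ext x
  simp only [mem_diff, mem_Ioc, not_and, not_le]
  constructor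
  · rintro ⟨⟨h1, h2⟩, h3⟩; exact ⟨h3 h1, h2⟩
  · rintro ⟨h1, h2⟩; exact ⟨⟨lt_of_le_of_lt hab h1, h2⟩, fun _ => h1⟩

lemma diff2 {a b c : ℝ} (hbc : b ≤ c) : Ioc a c \ Ioc b c = Ioc a b := by
  ext x
  simp only [mem_diff, mem_Ioc, not_and, not_le]
  constructor
  · rintro ⟨⟨h1, h2⟩, h3⟩
    refine ⟨h1, ?_⟩
    by_contra hx
    exact absurd h2 (not_le_of_gt (h3 (lt_of_not_ge hx)))
  · rintro ⟨h1, h2⟩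
    exact ⟨⟨h1, le_trans h2 hbc⟩, fun hb => absurd h2 (not_le_of_gt hb)⟩

lemma diff_cases {e f p q : ℝ} (hef : e < f) (hpq : p < q)
    (hd : DiffDef (Ioc e f) (Ioc p q)) :
    (p = e ∧ q < f ∧ Ioc e f \ Ioc p q = Ioc q f) ∨
    (q = f ∧ e < p ∧ Ioc e f \ Ioc p q = Ioc e p) := by
  obtain ⟨hsub, g, h, hgh, heq⟩ := hd
  obtain ⟨hqf, hep⟩ := (Set.Ioc_subset_Ioc_iff hpq).1 hsub
  by_cases hpe : p = e
  · have hde : Ioc e f \ Ioc p q = Ioc q f := by rw [hpe]; exact diff1 (hpe ▸ le_of_lt hpq)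
    have hqf2 : q < f := by
      rcases lt_or_eq_of_le hqf with h' | h'
      · exact h'
      · exfalso
        rw [hde, h', Set.Ioc_self] at heq
        exact absurd heq.symm (Set.Nonempty.ne_empty ⟨g + (h - g)/2, by constructor <;> [linarith; linarith]⟩ )
    exact Or.inl ⟨hpe, hqf2, hde⟩
  · by_cases hqff : q = f
    · have hde : Ioc e f \ Ioc p q = Ioc e p := by rw [← hqff]; exact diff2 (le_of_lt hpq)
      exact Or.inr ⟨hqff, lt_of_le_of_ne hep (Ne.symm hpe), hde⟩
    · exfalso
      have hep' : e < p := lt_of_le_of_ne hep (Ne.symm hpe)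
      have hqf' : q < f := lt_of_le_of_ne hqf hqff
      have hpmem : p ∈ Ioc g h := by
        rw [← heq]; exact ⟨⟨hep', le_of_lt (lt_of_lt_of_le hpq hqf)⟩, by simp⟩
      have hfmem : f ∈ Ioc g h := by
        rw [← heq]; exact ⟨⟨hef, le_rfl⟩, by simp [mem_Ioc]; intro _; linarith⟩
      have hqmem : q ∈ Ioc g h :=
        ⟨lt_of_lt_of_le hpmem.1 (le_of_lt hpq), le_trans (le_of_lt hqf') hfmem.2⟩
      rw [← heq] at hqmem
      exact hqmem.2 ⟨hpq, le_rfl⟩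

theorem stmt_10 (J J' K : Set ℝ) (hJ : IsOC J) (hJ' : IsOC J') (hK : IsOC K)
    (h : DiffDef K J' ∧ DiffDef (K \ J') J) :
    ((SumDef J J' ∧ DiffDef K (J ∪ J')) ∨ (DiffDef K J ∧ DiffDef (K \ J) J')) ∧
    ((SumDef J J' ∧ DiffDef K (J ∪ J')) → K \ (J ∪ J') = (K \ J') \ J) ∧
    ((DiffDef K J ∧ DiffDef (K \ J) J') → (K \ J) \ J' = (K \ J') \ J) ∧
    ((SumDef J J' ∧ DiffDef K (J ∪ J')) → (DiffDef K J ∧ DiffDef (K \ J) J') →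
      K \ (J ∪ J') = (K \ J) \ J') := by
  obtain ⟨h1, h2⟩ := h
  have hJK : J ⊆ K := h2.1.trans diff_subset
  have hdisj : J ∩ J' = ∅ :=
    eq_empty_iff_forall_notMem.2 (fun x hx => (h2.1 hx.1).2 hx.2)
  have hJ'sub : J' ⊆ K \ J := fun x hx => ⟨h1.1 hx, fun hxJ => (h2.1 hxJ).2 hx⟩
  have hUsub : J ∪ J' ⊆ K := union_subset hJK h1.1
  have idA : K \ (J ∪ J') = (K \ J') \ J := by rw [diff_diff, union_comm]
  have idB : (K \ J) \ J' = (K \ J') \ J := by rw [diff_diff, diff_diff, union_comm]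
  refine ⟨?_, fun _ => idA, fun _ => idB, fun _ _ => idA.trans idB.symm⟩
  obtain ⟨a, b, hab, rfl⟩ := hJ
  obtain ⟨a', b', ha'b', rfl⟩ := hJ'
  obtain ⟨c, d, hcd, rfl⟩ := hK
  rcases diff_cases hcd ha'b' h1 with ⟨ha', hb'd, hKd⟩ | ⟨hb', hca', hKd⟩
  · -- a' = c, K \ J' = Ioc b' d
    rw [hKd] at h2
    rcases diff_cases hb'd hab h2 with ⟨ha, hbd, hDd⟩ | ⟨hb, hb'a, hDd⟩
    · left
      have hU : Ioc a b ∪ Ioc a' b' = Ioc a' b := by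
        rw [union_comm, ha]
        exact Ioc_union_Ioc_eq_Ioc (le_of_lt ha'b') (le_of_lt (ha ▸ hab))
      refine ⟨⟨hdisj, a', b, by linarith [ha ▸ hab], hU⟩, hUsub, ?_⟩
      rw [idA, hKd, hDd]
      exact ⟨b, d, hbd, rfl⟩
    · right
      refine ⟨⟨hJK, c, a, by linarith [ha' ▸ ha'b'], ?_⟩, hJ'sub, ?_⟩
      · rw [← hb]
        exact diff2 (le_of_lt hab)
      · rw [idB, hKd, hDd]
        exact ⟨b', a, hb'a, rfl⟩
  · -- b' = d, K \ J' = Ioc c a'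
    rw [hKd] at h2
    rcases diff_cases hca' hab h2 with ⟨ha, hba', hDd⟩ | ⟨hb, hca, hDd⟩
    · right
      refine ⟨⟨hJK, b, d, by linarith [hb' ▸ ha'b'], ?_⟩, hJ'sub, ?_⟩
      · rw [ha]
        exact diff1 (le_of_lt (ha ▸ hab))
      · rw [idB, hKd, hDd]
        exact ⟨b, a', hba', rfl⟩
    · left
      have hU : Ioc a b ∪ Ioc a' b' = Ioc a b' := by
        rw [hb]
        exact Ioc_union_Ioc_eq_Ioc (hb ▸ le_of_lt hab) (le_of_lt ha'b')
      refine ⟨⟨hdisj, a, b', by linarith [hb ▸ hab], hU⟩, hUsub, ?_⟩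
      rw [idA, hKd, hDd]
      exact ⟨c, a, hca, rfl⟩
end

section
/- Define ξ(J,J') := (−1)^{⟨1_J,1_{J'}⟩}·(1_J,1_{J'}) for open-closed intervals of ℝ. If J ⊖ J' is defined or J' ⊖ J is defined, then (1_J, 1_{J'}) = −ξ(J,J')·ξ(J',J). -/
open Set

lemma diff_cases_s15 (a b a' b' : ℝ) (hab : a < b) (hab' : a' < b')
    (h : DiffDef (Set.Ioc a b) (Set.Ioc a' b')) :
    (a = a' ∧ b' < b) ∨ (a < a' ∧ b' = b) := by
  obtain ⟨hsub, c, d, hcd, hEq⟩ := h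
  rw [Set.Ioc_subset_Ioc_iff hab'] at hsub
  obtain ⟨hb, ha⟩ := hsub
  rcases eq_or_lt_of_le ha with ha | ha
  · rcases eq_or_lt_of_le hb with hb | hb
    · exfalso
      subst ha; subst hb
      rw [Set.diff_self] at hEq
      exact absurd hEq.symm (Set.nonempty_Ioc.mpr hcd).ne_empty
    · exact Or.inl ⟨ha, hb⟩
  · rcases eq_or_lt_of_le hb with hb | hb
    · exact Or.inr ⟨ha, hb⟩
    · exfalso
      have hmem : ∀ x : ℝ, x ∈ Set.Ioc c d ↔ (a < x ∧ x ≤ b) ∧ ¬(a' < x ∧ x ≤ b') := by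
        intro x
        rw [← hEq]; simp [Set.mem_diff]
      have ha'_mem : a' ∈ Set.Ioc c d := (hmem a').mpr ⟨⟨ha, le_of_lt (lt_trans hab' hb)⟩, by simp⟩
      have hb_mem : b ∈ Set.Ioc c d := (hmem b).mpr ⟨⟨hab, le_refl b⟩, fun h => absurd h.2 (not_le.mpr hb)⟩
      have hb'_mem : b' ∈ Set.Ioc c d :=
        ⟨lt_of_lt_of_le ha'_mem.1 (le_of_lt hab'), le_trans (le_of_lt hb) hb_mem.2⟩
      have := (hmem b').mp hb'_mem
      exact this.2 ⟨hab', le_refl b'⟩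

lemma calc10 (a b a' b' : ℝ) (e1 : eform a b a' b' = 1) (e2 : eform a' b' a b = 0) :
    sform a b a' b' = -(xiform a b a' b' * xiform a' b' a b) := by
  simp [xiform, sform, e1, e2]

lemma calc01 (a b a' b' : ℝ) (e1 : eform a b a' b' = 0) (e2 : eform a' b' a b = 1) :
    sform a b a' b' = -(xiform a b a' b' * xiform a' b' a b) := by
  simp [xiform, sform, e1, e2]

theorem stmt_15 (a b a' b' : ℝ) (hab : a < b) (hab' : a' < b')
    (hdiff : DiffDef (Set.Ioc a b) (Set.Ioc a' b') ∨ DiffDef (Set.Ioc a' b') (Set.Ioc a b)) :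
    sform a b a' b' = -(xiform a b a' b' * xiform a' b' a b) := by
  have key : (a = a' ∧ b' < b) ∨ (a < a' ∧ b' = b) ∨ (a' = a ∧ b < b') ∨ (a' < a ∧ b = b') := by
    rcases hdiff with h | h
    · rcases diff_cases_s15 a b a' b' hab hab' h with h | h
      · exact Or.inl h
      · exact Or.inr (Or.inl h)
    · rcases diff_cases_s15 a' b' a b hab' hab h with h | h
      · exact Or.inr (Or.inr (Or.inl h))
      · exact Or.inr (Or.inr (Or.inr h))
  rcases key with ⟨h1, h2⟩ | ⟨h1, h2⟩ | ⟨h1, h2⟩ | ⟨h1, h2⟩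
  · subst h1
    exact calc10 _ _ _ _ (by simp only [eform]; split_ifs <;> simp_all <;> linarith)
      (by simp only [eform]; split_ifs <;> simp_all <;> linarith)
  · subst h2
    exact calc01 _ _ _ _ (by simp only [eform]; split_ifs <;> simp_all <;> linarith)
      (by simp only [eform]; split_ifs <;> simp_all <;> linarith)
  · subst h1
    exact calc01 _ _ _ _ (by simp only [eform]; split_ifs <;> simp_all <;> linarith)
      (by simp only [eform]; split_ifs <;> simp_all <;> linarith)
  · subst h2
    exact calc10 _ _ _ _ (by simp only [eform]; split_ifs <;> simp_all <;> linarith)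
      (by simp only [eform]; split_ifs <;> simp_all <;> linarith)
end

section
/- Let J, J', K be open-closed intervals of ℝ such that J ⊕ J' is defined. If K ⊖ (J ⊕ J') is defined, then exactly one of (K ⊖ J) ⊖ J' and (K ⊖ J') ⊖ J is defined, and it equals K ⊖ (J ⊕ J'). -/
open Set

lemma diffIoc (c p q d : ℝ) (h1 : c ≤ p) (h2 : q ≤ d) (h3 : p ≤ q) :
    Ioc c d \ Ioc p q = Ioc c p ∪ Ioc q d := by
  ext x
  simp only [mem_diff, mem_Ioc, mem_union, not_and, not_le]
  constructor
  · rintro ⟨⟨hx1, hx2⟩, hx3⟩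
    by_cases h : x ≤ p
    · exact Or.inl ⟨hx1, h⟩
    · push_neg at h
      exact Or.inr ⟨hx3 h, hx2⟩
  · rintro (⟨hx1, hx2⟩ | ⟨hx1, hx2⟩)
    · exact ⟨⟨hx1, le_trans hx2 (le_trans h3 h2)⟩, fun h => absurd hx2 (not_le.2 h)⟩
    · exact ⟨⟨lt_of_le_of_lt (le_trans h1 h3) hx1, hx2⟩, fun _ => hx1⟩

lemma notIoc (p q r s : ℝ) (h1 : p < q) (h2 : q < r) (h3 : r < s) :
    ¬ IsOC (Ioc p q ∪ Ioc r s) := by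
  rintro ⟨α, β, hαβ, heq⟩
  have hq : q ∈ Ioc α β := heq ▸ (Or.inl ⟨h1, le_refl q⟩ : q ∈ Ioc p q ∪ Ioc r s)
  have hs : s ∈ Ioc α β := heq ▸ (Or.inr ⟨h3, le_refl s⟩ : s ∈ Ioc p q ∪ Ioc r s)
  have hr : r ∈ Ioc α β := ⟨lt_trans hq.1 h2, le_trans (le_of_lt h3) hs.2⟩
  have : r ∈ Ioc p q ∪ Ioc r s := heq ▸ hr
  rcases this with ⟨_, h⟩ | ⟨h, _⟩
  · exact absurd h (not_le.2 h2)
  · exact lt_irrefl r h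

lemma main (a m b c d : ℝ) (h1 : a < m) (h2 : m < b)
    (hsub : Ioc a b ⊆ Ioc c d) (hI : IsOC (Ioc c d \ Ioc a b)) :
    (DiffDef (Ioc c d) (Ioc a m) ∧ DiffDef (Ioc c d \ Ioc a m) (Ioc m b)) ∧
      ¬ (DiffDef (Ioc c d) (Ioc m b) ∧ DiffDef (Ioc c d \ Ioc m b) (Ioc a m)) ∨
    (DiffDef (Ioc c d) (Ioc m b) ∧ DiffDef (Ioc c d \ Ioc m b) (Ioc a m)) ∧
      ¬ (DiffDef (Ioc c d) (Ioc a m) ∧ DiffDef (Ioc c d \ Ioc a m) (Ioc m b)) := by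
  have hab : a < b := lt_trans h1 h2
  have hcd : b ≤ d ∧ c ≤ a := (Set.Ioc_subset_Ioc_iff hab).1 hsub
  obtain ⟨hbd, hca⟩ := hcd
  have hdiff : Ioc c d \ Ioc a b = Ioc c a ∪ Ioc b d :=
    diffIoc c a b d hca hbd (le_of_lt hab)
  rw [hdiff] at hI
  -- split on c = a vs b = d
  rcases eq_or_lt_of_le hca with hc | hc
  · -- c = a
    subst hc
    rcases eq_or_lt_of_le hbd with hd | hd
    · -- b = d : remainder empty, contradiction
      subst hd
      exfalso
      obtain ⟨α, β, hαβ, heq⟩ := hI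
      have : (Ioc c c ∪ Ioc b b : Set ℝ) = ∅ := by simp
      rw [this] at heq
      exact absurd (heq ▸ Set.nonempty_Ioc.2 hαβ) (by simp)
    · -- c = a, b < d : first option
      left
      have hKJ : Ioc c d \ Ioc c m = Ioc m d := by
        rw [diffIoc c c m d le_rfl (le_trans (le_of_lt h2) hbd) (le_of_lt h1)]
        simp
      refine ⟨⟨⟨Set.Ioc_subset_Ioc le_rfl (le_trans (le_of_lt h2) hbd),
        ⟨m, d, lt_trans h2 hd, hKJ⟩⟩, ?_⟩, ?_⟩
      · rw [hKJ]
        refine ⟨Set.Ioc_subset_Ioc le_rfl (le_of_lt hd), ⟨b, d, hd, ?_⟩⟩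
        rw [diffIoc m m b d le_rfl (le_of_lt hd) (le_of_lt h2)]
        simp
      · rintro ⟨⟨_, hIoc⟩, _⟩
        rw [diffIoc c m b d (le_of_lt h1) (le_of_lt hd) (le_of_lt h2)] at hIoc
        exact notIoc c m b d h1 h2 hd hIoc
  · -- c < a
    rcases eq_or_lt_of_le hbd with hd | hd
    · -- b = d : second option
      subst hd
      right
      have hKJ' : Ioc c b \ Ioc m b = Ioc c m := by
        rw [diffIoc c m b b (le_trans (le_of_lt hc) (le_of_lt h1)) le_rfl (le_of_lt h2)]
        simp
      refine ⟨⟨⟨Set.Ioc_subset_Ioc (le_trans (le_of_lt hc) (le_of_lt h1)) le_rfl,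
        ⟨c, m, lt_trans hc h1, hKJ'⟩⟩, ?_⟩, ?_⟩
      · rw [hKJ']
        refine ⟨Set.Ioc_subset_Ioc (le_of_lt hc) le_rfl, ⟨c, a, hc, ?_⟩⟩
        rw [diffIoc c a m m (le_of_lt hc) le_rfl (le_of_lt h1)]
        simp
      · rintro ⟨⟨_, hIoc⟩, _⟩
        rw [diffIoc c a m b (le_of_lt hc) (le_of_lt h2) (le_of_lt h1)] at hIoc
        exact notIoc c a m b hc h1 h2 hIoc
    · -- c < a, b < d : contradiction
      exact absurd hI (notIoc c a b d hc hab hd)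

theorem stmt_18 (J J' K : Set ℝ) (hJ : IsOC J) (hJ' : IsOC J') (hK : IsOC K)
    (hsum : SumDef J J') (hdiff : DiffDef K (J ∪ J')) :
    (((DiffDef K J ∧ DiffDef (K \ J) J') ∧ ¬ (DiffDef K J' ∧ DiffDef (K \ J') J)) ∨
     ((DiffDef K J' ∧ DiffDef (K \ J') J) ∧ ¬ (DiffDef K J ∧ DiffDef (K \ J) J'))) ∧
    ((DiffDef K J ∧ DiffDef (K \ J) J') → (K \ J) \ J' = K \ (J ∪ J')) ∧
    ((DiffDef K J' ∧ DiffDef (K \ J') J) → (K \ J') \ J = K \ (J ∪ J')) := by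
  refine ⟨?_, fun _ => Set.diff_diff, fun _ => by rw [Set.diff_diff, Set.union_comm]⟩
  obtain ⟨a, b, hab, rfl⟩ := hJ
  obtain ⟨a', b', hab', rfl⟩ := hJ'
  obtain ⟨c, d, hcd, rfl⟩ := hK
  obtain ⟨hdisj, hU⟩ := hsum
  have hd2 : b ≤ a' ∨ b' ≤ a := by
    by_contra hcon
    push_neg at hcon
    obtain ⟨h1, h2⟩ := hcon
    rw [Set.Ioc_inter_Ioc, Set.Ioc_eq_empty_iff, not_lt] at hdisj
    exact absurd hdisj (not_le.2 (max_lt (lt_min hab h2) (lt_min h1 hab')))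
  have hadj : b = a' ∨ b' = a := by
    obtain ⟨p, q, hpq, hUeq⟩ := hU
    rcases hd2 with h | h
    · left
      by_contra hne
      have hlt : b < a' := lt_of_le_of_ne h hne
      set t := (b + a') / 2 with ht
      have ht1 : b < t := by rw [ht]; linarith
      have ht2 : t < a' := by rw [ht]; linarith
      have hb : b ∈ Set.Ioc p q := hUeq ▸ (Set.mem_union_left _ ⟨hab, le_rfl⟩)
      have hb' : b' ∈ Set.Ioc p q := hUeq ▸ (Set.mem_union_right _ ⟨hab', le_rfl⟩)
      have htm : t ∈ Set.Ioc p q :=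
        ⟨lt_trans hb.1 ht1, le_trans (le_of_lt (lt_trans ht2 hab')) hb'.2⟩
      have : t ∈ Set.Ioc a b ∪ Set.Ioc a' b' := hUeq ▸ htm
      rcases this with ⟨_, h'⟩ | ⟨h', _⟩
      · exact absurd h' (not_le.2 ht1)
      · exact absurd h' (not_lt.2 (le_of_lt ht2))
    · right
      by_contra hne
      have hlt : b' < a := lt_of_le_of_ne h hne
      set t := (b' + a) / 2 with ht
      have ht1 : b' < t := by rw [ht]; linarith
      have ht2 : t < a := by rw [ht]; linarith
      have hb : b' ∈ Set.Ioc p q := hUeq ▸ (Set.mem_union_right _ ⟨hab', le_rfl⟩)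
      have hb' : b ∈ Set.Ioc p q := hUeq ▸ (Set.mem_union_left _ ⟨hab, le_rfl⟩)
      have htm : t ∈ Set.Ioc p q :=
        ⟨lt_trans hb.1 ht1, le_trans (le_of_lt (lt_trans ht2 hab)) hb'.2⟩
      have : t ∈ Set.Ioc a b ∪ Set.Ioc a' b' := hUeq ▸ htm
      rcases this with ⟨h', _⟩ | ⟨_, h'⟩
      · exact absurd h' (not_lt.2 (le_of_lt ht2))
      · exact absurd h' (not_le.2 ht1)
  obtain ⟨hsub, hI⟩ := hdiff
  rcases hadj with h | h
  · subst h
    have hbb' : b < b' := hab'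
    have hUeq : Set.Ioc a b ∪ Set.Ioc b b' = Set.Ioc a b' :=
      Set.Ioc_union_Ioc_eq_Ioc (le_of_lt hab) (le_of_lt hbb')
    rw [hUeq] at hsub hI
    exact main a b b' c d hab hbb' hsub hI
  · subst h
    have hbb' : b' < b := hab
    have hUeq : Set.Ioc b' b ∪ Set.Ioc a' b' = Set.Ioc a' b := by
      rw [Set.union_comm]
      exact Set.Ioc_union_Ioc_eq_Ioc (le_of_lt hab') (le_of_lt hbb')
    rw [hUeq] at hsub hI
    exact (main a' b' b c d hab' hbb' hsub hI).symm
end
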